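/- arXiv:1401.0803 — 7 statements merged into one kernel-verified Lean document; each statement's English description precedes it below -/
import Mathlib

section
/- Let φ be the structure function of a semicoherent system on n components. Then a subset A ⊆ [n] is a minimal path set of the system if and only if A is a minimal element (with respect to set inclusion) of the family {B ⊆ [n] : d(B) ≠ 0}; moreover, every minimal path set A satisfies d(A) = 1. -/
/-!
If `φ` vanishes on every proper subset of `A`, the defining sum of `d(A)` collapses to its top
term, so `d(A) = φ(A)`. This collapse, applied along a strong induction, shows that `d` vanishes
on all subsets of a set exactly when `φ` does. Hence `{φ ≠ 0}` and `{d ≠ 0}` have the same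
minimal elements, on which `d = φ = 1`.
-/

open Finset

/-- The coefficients of the simple (multilinear) form of the structure function:
`d(A) = ∑_{B ⊆ A} (−1)^{|A|−|B|} φ(B)`. -/
def dCoef {n : ℕ} (φ : Finset (Fin n) → ℚ) (A : Finset (Fin n)) : ℚ :=
  ∑ B ∈ A.powerset, (-1 : ℚ) ^ (A.card - B.card) * φ B

namespace dCoef

variable {n : ℕ} {φ : Finset (Fin n) → ℚ} {A : Finset (Fin n)}

theorem eq_of_forall_ssubset_eq_zero (h : ∀ B ⊂ A, φ B = 0) :
    dCoef φ A = φ A := by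
  rw [dCoef, sum_eq_single_of_mem A (mem_powerset_self A)]
  · simp
  · intro B hB hBA
    rw [h B (ssubset_of_subset_of_ne (mem_powerset.mp hB) hBA), mul_zero]

theorem eq_zero_of_forall_subset_eq_zero (h : ∀ B ⊆ A, φ B = 0) :
    dCoef φ A = 0 :=
  sum_eq_zero fun B hB => by rw [h B (mem_powerset.mp hB), mul_zero]

theorem apply_eq_zero_of_forall_subset_dCoef_eq_zero (h : ∀ B ⊆ A, dCoef φ B = 0) :
    φ A = 0 := by
  induction A using Finset.strongInduction with
  | H A ih =>
    have hproper : ∀ B ⊂ A, φ B = 0 := fun B hBA =>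
      ih B hBA fun C hCB => h C (hCB.trans hBA.subset)
    rw [← eq_of_forall_ssubset_eq_zero hproper]
    exact h A subset_rfl

theorem forall_ssubset_eq_zero_iff :
    (∀ B ⊂ A, dCoef φ B = 0) ↔ ∀ B ⊂ A, φ B = 0 :=
  ⟨fun h _ hBA =>
    apply_eq_zero_of_forall_subset_dCoef_eq_zero fun _ hCB => h _ (hCB.trans_ssubset hBA),
   fun h _ hBA => eq_zero_of_forall_subset_eq_zero fun _ hCB => h _ (hCB.trans_ssubset hBA)⟩

end dCoef

theorem min_path_sets_eq_minimal_monomials_general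
    (n : ℕ)
    (φ : Finset (Fin n) → ℚ)
    (h01 : ∀ A, φ A = 0 ∨ φ A = 1) :
    ∀ A : Finset (Fin n),
      ((φ A = 1 ∧ ∀ A' ⊂ A, φ A' = 0)
        ↔ (dCoef φ A ≠ 0 ∧ ∀ B ⊂ A, dCoef φ B = 0)) ∧
      ((φ A = 1 ∧ ∀ A' ⊂ A, φ A' = 0) → dCoef φ A = 1) := by
  intro A
  rw [dCoef.forall_ssubset_eq_zero_iff]
  have hdA : (∀ B ⊂ A, φ B = 0) → dCoef φ A = φ A := dCoef.eq_of_forall_ssubset_eq_zero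
  refine ⟨⟨fun ⟨hA, hmin⟩ => ⟨?_, hmin⟩, fun ⟨hd, hmin⟩ => ⟨?_, hmin⟩⟩,
    fun ⟨hA, hmin⟩ => (hdA hmin).trans hA⟩
  · rw [hdA hmin, hA]
    exact one_ne_zero
  · rw [hdA hmin] at hd
    exact (h01 A).resolve_left hd

/-- `A` is a minimal path set of a semicoherent system `φ` iff `A` is a
minimal element (w.r.t. inclusion) of the family `{B : d(B) ≠ 0}`; moreover, every minimal
path set `A` satisfies `d(A) = 1`. -/
theorem min_path_sets_eq_minimal_monomials
    (n : ℕ) (hn : 1 ≤ n)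
    (φ : Finset (Fin n) → ℚ)
    (h01 : ∀ A, φ A = 0 ∨ φ A = 1)
    (hmono : ∀ A B : Finset (Fin n), A ⊆ B → φ A ≤ φ B)
    (hempty : φ ∅ = 0) (hfull : φ Finset.univ = 1) :
    ∀ A : Finset (Fin n),
      ((φ A = 1 ∧ ∀ A' ⊂ A, φ A' = 0)
        ↔ (dCoef φ A ≠ 0 ∧ ∀ B ⊂ A, dCoef φ B = 0)) ∧
      ((φ A = 1 ∧ ∀ A' ⊂ A, φ A' = 0) → dCoef φ A = 1) :=
  min_path_sets_eq_minimal_monomials_general n φ h01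
end

section
/- Let φ be the structure function of a semicoherent system on n components with minimal path sets P₁,…,P_r. Then for every A ⊆ [n], d(A) = ∑_{∅ ≠ B ⊆ {1,…,r}, ⋃_{j∈B} P_j = A} (−1)^{|B|−1}. In particular, d(A) equals the number of odd formations of A minus the number of even formations of A, where a formation of A is a nonempty set B of indices of minimal path sets whose union equals A, called odd (resp. even) if |B| is odd (resp. even). -/
/-!
A set `C` is a path set exactly when it contains some minimal path set, so
`φ(C) = 1 - ∏ⱼ (1 - [Pⱼ ⊆ C])`. Expanding the product (inclusion–exclusion) writes `φ(C)` as
`∑_{D ⊆ C} f(D)`, where `f(D)` is the signed count `∑ (-1)^{|B|-1}` of the formations `B` of `D`.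
Möbius inversion on the Boolean lattice then identifies the coefficients `d(A)` with `f(A)`.
-/

open Finset

section MoebiusInversion

variable {α R : Type*} [DecidableEq α] [CommRing R]

theorem sum_Icc_neg_one_pow_card_sdiff_of_ssubset {U A : Finset α} (h : U ⊂ A) :
    ∑ C ∈ Icc U A, (-1 : R) ^ #(A \ C) = 0 := by
  have hcompl : ∑ C ∈ Icc U A, (-1 : R) ^ #(A \ C) = ∑ D ∈ (A \ U).powerset, (-1 : R) ^ #D := by
    refine sum_nbij' (A \ ·) (A \ ·) ?_ ?_ ?_ ?_ fun _ _ => rfl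
    · intro C hC
      exact mem_powerset.2 (sdiff_subset_sdiff subset_rfl (mem_Icc.1 hC).1)
    · intro D hD
      refine mem_Icc.2 ⟨?_, sdiff_subset⟩
      exact subset_sdiff.2 ⟨h.subset, disjoint_of_subset_right (mem_powerset.1 hD) disjoint_sdiff⟩
    · exact fun C hC => Finset.sdiff_sdiff_eq_self (mem_Icc.1 hC).2
    · exact fun D hD => Finset.sdiff_sdiff_eq_self ((mem_powerset.1 hD).trans sdiff_subset)
  rw [hcompl]
  exact_mod_cast congrArg (Int.cast : ℤ → R)
    (sum_powerset_neg_one_pow_card_of_nonempty (sdiff_nonempty.2 h.2))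

theorem sum_powerset_neg_one_pow_mul_sum_powerset (g : Finset α → R) (A : Finset α) :
    ∑ C ∈ A.powerset, (-1 : R) ^ (#A - #C) * ∑ D ∈ C.powerset, g D = g A := by
  calc ∑ C ∈ A.powerset, (-1 : R) ^ (#A - #C) * ∑ D ∈ C.powerset, g D
      = ∑ C ∈ A.powerset, ∑ D ∈ C.powerset, (-1 : R) ^ #(A \ C) * g D :=
        sum_congr rfl fun C hC => by rw [card_sdiff_of_subset (mem_powerset.1 hC), mul_sum]
    _ = ∑ D ∈ A.powerset, (∑ C ∈ Icc D A, (-1 : R) ^ #(A \ C)) * g D := by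
        simp_rw [sum_mul]
        refine sum_comm' fun C D => ?_
        simp only [mem_powerset, mem_Icc]
        exact ⟨fun h => ⟨⟨h.2, h.1⟩, h.2.trans h.1⟩, fun h => ⟨h.1.2, h.1.1⟩⟩
    _ = g A := by
        rw [sum_eq_single_of_mem A (mem_powerset_self A)]
        · simp
        · intro D hD hDA
          rw [sum_Icc_neg_one_pow_card_sdiff_of_ssubset (ssubset_of_subset_of_ne
            (mem_powerset.1 hD) hDA), zero_mul]

end MoebiusInversion

section Formations

variable {ι α R : Type*} [CommRing R]

theorem sum_neg_one_pow_card_sub_one_eq_card_odd_sub_card_even (F : Finset (Finset ι))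
    (hF : ∀ B ∈ F, B.Nonempty) :
    ∑ B ∈ F, (-1 : R) ^ (#B - 1) =
      #(F.filter fun B => Odd #B) - #(F.filter fun B => Even #B) := by
  calc ∑ B ∈ F, (-1 : R) ^ (#B - 1) = ∑ B ∈ F, if Odd #B then 1 else -1 := by
        refine sum_congr rfl fun B hB => ?_
        have hpos := card_pos.2 (hF B hB)
        split_ifs with hodd
        · exact (Nat.Odd.sub_odd hodd odd_one).neg_one_pow
        · exact (Nat.Even.sub_odd hpos (Nat.not_odd_iff_even.1 hodd) odd_one).neg_one_pow
    _ = _ := by simp [sum_ite, Nat.not_odd_iff_even, sub_eq_add_neg]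

variable [DecidableEq ι]

theorem sum_filter_nonempty_neg_one_pow_card_sub_one (S : Finset ι) :
    ∑ B ∈ S.powerset.filter Finset.Nonempty, (-1 : R) ^ (#B - 1) =
      if S.Nonempty then 1 else 0 := by
  have hsign : ∀ B ∈ S.powerset.filter Finset.Nonempty, (-1 : R) ^ (#B - 1) = -(-1) ^ #B := by
    intro B hB
    rw [← Nat.sub_add_cancel (card_pos.2 (mem_filter.1 hB).2), pow_succ, Nat.add_sub_cancel]
    ring
  have hall : ∑ B ∈ S.powerset, (-1 : R) ^ #B = if S = ∅ then 1 else 0 := by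
    exact_mod_cast congrArg (Int.cast : ℤ → R) sum_powerset_neg_one_pow_card
  simp_rw [sum_congr rfl hsign, sum_neg_distrib, nonempty_iff_ne_empty, filter_ne',
    sum_erase_eq_sub (empty_mem_powerset S), hall]
  by_cases hS : S = ∅ <;> simp [hS]

variable [Fintype ι] [DecidableEq α]

def formations (P : ι → Finset α) (A : Finset α) : Finset (Finset ι) :=
  (univ : Finset ι).powerset.filter fun B => B.Nonempty ∧ B.biUnion P = A

theorem sum_powerset_sum_formations (P : ι → Finset α) (C : Finset α) :
    ∑ D ∈ C.powerset, ∑ B ∈ formations P D, (-1 : R) ^ (#B - 1) =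
      if ∃ j, P j ⊆ C then 1 else 0 := by
  rw [sum_comm' (t' := ((univ : Finset ι).filter (P · ⊆ C)).powerset.filter Finset.Nonempty)
    (s' := fun B => {B.biUnion P})]
  · simp only [sum_singleton, sum_filter_nonempty_neg_one_pow_card_sub_one, filter_nonempty_iff,
      mem_univ, true_and]
  · intro D B
    simp only [formations, mem_powerset, mem_filter, mem_singleton, subset_univ, true_and]
    constructor
    · rintro ⟨hDC, hB, rfl⟩
      exact ⟨rfl, fun j hj => mem_filter.2 ⟨mem_univ j, (subset_biUnion_of_mem P hj).trans hDC⟩, hB⟩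
    · rintro ⟨rfl, hBC, hB⟩
      exact ⟨biUnion_subset_iff_forall_subset.2 fun j hj => (mem_filter.1 (hBC hj)).2, hB, rfl⟩

end Formations

section StructureFunction

variable {α ι : Type*} (φ : Finset α → ℚ) (P : ι → Finset α)

theorem exists_minimalPath_subset (h01 : ∀ A, φ A = 0 ∨ φ A = 1)
    (hP : ∀ A, (∃ j, P j = A) ↔ (φ A = 1 ∧ ∀ A' ⊂ A, φ A' = 0))
    {A : Finset α} (hA : φ A = 1) : ∃ j, P j ⊆ A := by
  obtain ⟨M, hMA, hM⟩ := exists_minimal_le_of_wellFoundedLT (fun B => φ B = 1) A hA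
  have hMmin : ∀ A' ⊂ M, φ A' = 0 := fun A' hA' =>
    (h01 A').resolve_right ((minimal_iff_forall_lt.1 hM).2 hA')
  obtain ⟨j, hj⟩ := (hP M).2 ⟨hM.1, hMmin⟩
  exact ⟨j, hj ▸ hMA⟩

theorem eq_one_iff_exists_minimalPath_subset (h01 : ∀ A, φ A = 0 ∨ φ A = 1)
    (hmono : ∀ A B, A ⊆ B → φ A ≤ φ B)
    (hP : ∀ A, (∃ j, P j = A) ↔ (φ A = 1 ∧ ∀ A' ⊂ A, φ A' = 0)) (A : Finset α) :
    φ A = 1 ↔ ∃ j, P j ⊆ A := by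
  refine ⟨exists_minimalPath_subset φ P h01 hP, fun ⟨j, hj⟩ => ?_⟩
  have hle : 1 ≤ φ A := ((hP (P j)).1 ⟨j, rfl⟩).1 ▸ hmono _ _ hj
  exact (h01 A).resolve_left fun h => by linarith

theorem eq_sum_powerset_sum_formations [DecidableEq α] [Fintype ι] [DecidableEq ι]
    (h01 : ∀ A, φ A = 0 ∨ φ A = 1) (hmono : ∀ A B, A ⊆ B → φ A ≤ φ B)
    (hP : ∀ A, (∃ j, P j = A) ↔ (φ A = 1 ∧ ∀ A' ⊂ A, φ A' = 0)) (C : Finset α) :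
    φ C = ∑ D ∈ C.powerset, ∑ B ∈ formations P D, (-1 : ℚ) ^ (#B - 1) := by
  have hφ := eq_one_iff_exists_minimalPath_subset φ P h01 hmono hP C
  rw [sum_powerset_sum_formations]
  split_ifs with h
  · exact hφ.2 h
  · exact (h01 C).resolve_right (mt hφ.1 h)

end StructureFunction

theorem dCoef_eq_odd_sub_even_formations_general
    (n r : ℕ)
    (φ : Finset (Fin n) → ℚ)
    (h01 : ∀ A, φ A = 0 ∨ φ A = 1)
    (hmono : ∀ A B : Finset (Fin n), A ⊆ B → φ A ≤ φ B)
    (P : Fin r → Finset (Fin n))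
    (hP : ∀ A : Finset (Fin n),
      (∃ j, P j = A) ↔ (φ A = 1 ∧ ∀ A' ⊂ A, φ A' = 0)) :
    ∀ A : Finset (Fin n),
      (dCoef φ A
        = ∑ B ∈ (Finset.univ : Finset (Fin r)).powerset.filter
            (fun B => B.Nonempty ∧ B.biUnion P = A),
            (-1 : ℚ) ^ (B.card - 1)) ∧
      dCoef φ A
        = (((Finset.univ : Finset (Fin r)).powerset.filter
              (fun B => B.Nonempty ∧ B.biUnion P = A ∧ Odd B.card)).card : ℚ)
          - (((Finset.univ : Finset (Fin r)).powerset.filter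
              (fun B => B.Nonempty ∧ B.biUnion P = A ∧ Even B.card)).card : ℚ) := by
  intro A
  have hd : dCoef φ A = ∑ B ∈ formations P A, (-1 : ℚ) ^ (#B - 1) := by
    simp_rw [dCoef, eq_sum_powerset_sum_formations φ P h01 hmono hP]
    exact sum_powerset_neg_one_pow_mul_sum_powerset _ A
  refine ⟨hd, hd.trans ?_⟩
  rw [sum_neg_one_pow_card_sub_one_eq_card_odd_sub_card_even _
    fun B hB => (mem_filter.1 hB).2.1]
  simp only [formations, filter_filter, and_assoc]

/-- If `P₁,…,P_r` are the minimal path sets of a semicoherent system `φ`,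
then `d(A) = ∑_{∅ ≠ B ⊆ [r], ⋃_{j∈B} P_j = A} (−1)^{|B|−1}`; in particular `d(A)` is the
number of odd formations of `A` minus the number of even formations of `A`. -/
theorem dCoef_eq_odd_sub_even_formations
    (n r : ℕ) (hn : 1 ≤ n)
    (φ : Finset (Fin n) → ℚ)
    (h01 : ∀ A, φ A = 0 ∨ φ A = 1)
    (hmono : ∀ A B : Finset (Fin n), A ⊆ B → φ A ≤ φ B)
    (hempty : φ ∅ = 0) (hfull : φ Finset.univ = 1)
    (P : Fin r → Finset (Fin n)) (hPinj : Function.Injective P)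
    (hP : ∀ A : Finset (Fin n),
      (∃ j, P j = A) ↔ (φ A = 1 ∧ ∀ A' ⊂ A, φ A' = 0)) :
    ∀ A : Finset (Fin n),
      (dCoef φ A
        = ∑ B ∈ (Finset.univ : Finset (Fin r)).powerset.filter
            (fun B => B.Nonempty ∧ B.biUnion P = A),
            (-1 : ℚ) ^ (B.card - 1)) ∧
      dCoef φ A
        = (((Finset.univ : Finset (Fin r)).powerset.filter
              (fun B => B.Nonempty ∧ B.biUnion P = A ∧ Odd B.card)).card : ℚ)
          - (((Finset.univ : Finset (Fin r)).powerset.filter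
              (fun B => B.Nonempty ∧ B.biUnion P = A ∧ Even B.card)).card : ℚ) :=
  dCoef_eq_odd_sub_even_formations_general n r φ h01 hmono P hP
end

section
/- Let φ be the structure function of a semicoherent system on n components. Then a subset A ⊆ [n] is a minimal cut set of the system if and only if A is a minimal element (with respect to set inclusion) of the family {B ⊆ [n] : d^D(B) ≠ 0}; moreover, every minimal cut set A satisfies d^D(A) = 1. -/
/-!
If `ψ` vanishes strictly below `A`, only the term `B = A` of the sum defining `dCoef ψ A`
survives, so `dCoef ψ A = ψ A`. By strong induction, `dCoef ψ` therefore vanishes strictly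
below `A` iff `ψ` does. With `ψ = φᴰ`, a minimal cut set is exactly a set `A` with
`φᴰ(A) = 1` and `φᴰ = 0` strictly below `A`, and `φᴰ(A) ≠ 0` means `φᴰ(A) = 1` since `φ` is
`0/1`-valued.
-/

open Finset

/-- The dual structure function `φᴰ(A) = 1 − φ([n]∖A)`. -/
def dualFun {n : ℕ} (φ : Finset (Fin n) → ℚ) (A : Finset (Fin n)) : ℚ :=
  1 - φ Aᶜ

section

variable {n : ℕ} {ψ : Finset (Fin n) → ℚ} {A : Finset (Fin n)}

lemma dCoef_eq_self_of_forall_ssubset (h : ∀ B ⊂ A, ψ B = 0) : dCoef ψ A = ψ A := by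
  rw [dCoef, sum_eq_single_of_mem A (mem_powerset_self A) fun B hB hBA =>
    by rw [h B (ssubset_of_subset_of_ne (mem_powerset.mp hB) hBA), mul_zero]]
  simp

lemma forall_ssubset_dCoef_eq_zero_iff :
    (∀ B ⊂ A, dCoef ψ B = 0) ↔ ∀ B ⊂ A, ψ B = 0 := by
  constructor
  · intro hd B
    induction B using Finset.strongInduction with
    | H B ih =>
      intro hBA
      rw [← dCoef_eq_self_of_forall_ssubset fun C hCB => ih C hCB (hCB.trans hBA), hd B hBA]
  · intro hψ B hBA
    rw [dCoef_eq_self_of_forall_ssubset fun C hCB => hψ C (hCB.trans hBA), hψ B hBA]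

end

theorem min_cut_sets_eq_minimal_dual_monomials_general
    (n : ℕ)
    (φ : Finset (Fin n) → ℚ)
    (h01 : ∀ A, φ A = 0 ∨ φ A = 1) :
    ∀ A : Finset (Fin n),
      ((φ Aᶜ = 0 ∧ ∀ A' ⊂ A, φ A'ᶜ = 1)
        ↔ (dCoef (dualFun φ) A ≠ 0 ∧ ∀ B ⊂ A, dCoef (dualFun φ) B = 0)) ∧
      ((φ Aᶜ = 0 ∧ ∀ A' ⊂ A, φ A'ᶜ = 1) → dCoef (dualFun φ) A = 1) := by
  intro A
  have hcut : (φ Aᶜ = 0 ∧ ∀ A' ⊂ A, φ A'ᶜ = 1) ↔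
      (dualFun φ A = 1 ∧ ∀ B ⊂ A, dualFun φ B = 0) := by
    simp only [dualFun, sub_eq_zero, sub_eq_self, eq_comm (a := (1 : ℚ))]
  have hne : dualFun φ A ≠ 0 ↔ dualFun φ A = 1 := by
    rcases h01 Aᶜ with h | h <;> simp [dualFun, h]
  rw [hcut, forall_ssubset_dCoef_eq_zero_iff, ← hne]
  exact ⟨and_congr_left fun h => by rw [dCoef_eq_self_of_forall_ssubset h],
    fun ⟨hA, h⟩ => by rw [dCoef_eq_self_of_forall_ssubset h, ← hne.mp hA]⟩

/-- `A` is a minimal cut set of a semicoherent system `φ` iff `A` is a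
minimal element (w.r.t. inclusion) of the family `{B : dᴰ(B) ≠ 0}`, where `dᴰ` are the
coefficients of the simple form of the dual structure function; moreover, every minimal cut
set `A` satisfies `dᴰ(A) = 1`. -/
theorem min_cut_sets_eq_minimal_dual_monomials
    (n : ℕ) (hn : 1 ≤ n)
    (φ : Finset (Fin n) → ℚ)
    (h01 : ∀ A, φ A = 0 ∨ φ A = 1)
    (hmono : ∀ A B : Finset (Fin n), A ⊆ B → φ A ≤ φ B)
    (hempty : φ ∅ = 0) (hfull : φ Finset.univ = 1) :
    ∀ A : Finset (Fin n),
      ((φ Aᶜ = 0 ∧ ∀ A' ⊂ A, φ A'ᶜ = 1)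
        ↔ (dCoef (dualFun φ) A ≠ 0 ∧ ∀ B ⊂ A, dCoef (dualFun φ) B = 0)) ∧
      ((φ Aᶜ = 0 ∧ ∀ A' ⊂ A, φ A'ᶜ = 1) → dCoef (dualFun φ) A = 1) :=
  min_cut_sets_eq_minimal_dual_monomials_general n φ h01
end

section
/- Let φ be the structure function of a semicoherent system on n components with minimal path sets P₁,…,P_r. Then for every k with 1 ≤ k ≤ n, d_k = ∑_{∅ ≠ B ⊆ {1,…,r}, |⋃_{j∈B} P_j| = k} (−1)^{|B|−1}, where the sum is over all nonempty subsets B of {1,…,r} whose corresponding union of minimal path sets has exactly k elements. -/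
open Finset

/-- `d_k = ∑_{A ⊆ [n], |A| = k} d(A)`. -/
def dk {n : ℕ} (φ : Finset (Fin n) → ℚ) (k : ℕ) : ℚ :=
  ∑ A ∈ (Finset.univ : Finset (Fin n)).powerset.filter (fun A => A.card = k), dCoef φ A

/-! Minimality makes `φ A = 1` exactly when `A` contains some `P j`, so inclusion–exclusion over
these events writes `φ` as `∑_{B ≠ ∅} (-1)^(|B|-1) [⋃_{j ∈ B} P j ⊆ ·]`. The transform `dCoef`
is linear and sends `[U ⊆ ·]` to `[U = ·]`, since the alternating sum over an interval of the
Boolean lattice vanishes unless the interval is a point. Hence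
`d(A) = ∑_{B ≠ ∅, ⋃_{j ∈ B} P j = A} (-1)^(|B|-1)`, and summing over `|A| = k` gives the claim. -/

theorem sum_Icc_neg_one_pow_card_sub {α R : Type*} [DecidableEq α] [CommRing R]
    (U A : Finset α) :
    ∑ C ∈ Icc U A, (-1 : R) ^ (#A - #C) = if U = A then 1 else 0 := by
  by_cases hUA : U ⊆ A
  · have hdisj : ∀ D ∈ (A \ U).powerset, Disjoint U D := fun D hD =>
      disjoint_of_subset_right (mem_powerset.1 hD) disjoint_sdiff
    rw [Icc_eq_image_powerset hUA, sum_image fun D hD D' hD' h => by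
      simpa [union_sdiff_cancel_left (hdisj D hD), union_sdiff_cancel_left (hdisj D' hD')]
        using congrArg (· \ U) h]
    have hbinom := sum_pow_mul_eq_add_pow (1 : R) (-1) (A \ U)
    simp only [one_pow, one_mul, add_neg_cancel, zero_pow_eq, card_eq_zero,
      sdiff_eq_empty_iff_subset] at hbinom
    simp only [show A ⊆ U ↔ U = A from ⟨hUA.antisymm, fun h => h ▸ Subset.rfl⟩] at hbinom
    rw [← hbinom]
    refine sum_congr rfl fun D hD => ?_
    rw [card_union_of_disjoint (hdisj D hD), card_sdiff_of_subset hUA, Nat.sub_add_eq]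
  · rw [Icc_eq_empty hUA, sum_empty, if_neg fun h => hUA h.subset]

theorem dCoef_ite_subset {n : ℕ} (U A : Finset (Fin n)) :
    dCoef (fun C => if U ⊆ C then 1 else 0) A = if U = A then 1 else 0 := by
  simp only [dCoef, mul_ite, mul_one, mul_zero]
  rw [← sum_filter, ← Icc_eq_filter_powerset, sum_Icc_neg_one_pow_card_sub]

theorem dCoef_sum_mul {n : ℕ} {ι : Type*} (s : Finset ι) (c : ι → ℚ)
    (f : ι → Finset (Fin n) → ℚ) (A : Finset (Fin n)) :
    dCoef (fun C => ∑ i ∈ s, c i * f i C) A = ∑ i ∈ s, c i * dCoef (f i) A := by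
  simp only [dCoef, mul_sum]
  rw [sum_comm]
  exact sum_congr rfl fun i _ => sum_congr rfl fun C _ => by ring

section MinimalPathSets

variable {α ι : Type*} {φ : Finset α → ℚ} {P : ι → Finset α}

theorem eq_one_iff_exists_subset (h01 : ∀ A, φ A = 0 ∨ φ A = 1) (hmono : Monotone φ)
    (hP : ∀ A, (∃ j, P j = A) ↔ (φ A = 1 ∧ ∀ A' ⊂ A, φ A' = 0)) (A : Finset α) :
    φ A = 1 ↔ ∃ j, P j ⊆ A := by
  constructor
  · intro hA
    obtain ⟨B, hBA, hBmin⟩ := exists_minimal_le_of_wellFoundedLT (φ · = 1) A hA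
    rw [minimal_iff_forall_lt] at hBmin
    obtain ⟨j, rfl⟩ :=
      (hP B).2 ⟨hBmin.1, fun A' hA' => (h01 A').resolve_right (hBmin.2 hA')⟩
    exact ⟨j, hBA⟩
  · rintro ⟨j, hj⟩
    have hPj : φ (P j) = 1 := ((hP (P j)).1 ⟨j, rfl⟩).1
    exact (h01 A).resolve_left fun h0 => by linarith [hmono hj]

theorem eq_sum_powerset_ite_biUnion_subset [Fintype ι] [DecidableEq α]
    (h01 : ∀ A, φ A = 0 ∨ φ A = 1) (hmono : Monotone φ)
    (hP : ∀ A, (∃ j, P j = A) ↔ (φ A = 1 ∧ ∀ A' ⊂ A, φ A' = 0)) (A : Finset α) :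
    φ A = ∑ B ∈ (univ : Finset ι).powerset with B.Nonempty,
      (-1 : ℚ) ^ (#B - 1) * if B.biUnion P ⊆ A then 1 else 0 := by
  have hφ : φ A = Set.indicator (⋃ j ∈ univ, {C | P j ⊆ C}) 1 A := by
    by_cases hA : ∃ j, P j ⊆ A
    · rw [(eq_one_iff_exists_subset h01 hmono hP A).2 hA, Set.indicator_of_mem (by simpa using hA)]
      rfl
    · rw [(h01 A).resolve_right (mt (eq_one_iff_exists_subset h01 hmono hP A).1 hA),
        Set.indicator_of_notMem (by simpa using hA)]
  rw [hφ, indicator_biUnion_eq_sum_powerset]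
  refine sum_congr rfl fun B hB => ?_
  have hB : 1 ≤ #B := card_pos.2 (mem_filter.1 hB).2
  have hsign : (-1 : ℚ) ^ (#B + 1) = (-1) ^ (#B - 1) := by
    rw [show #B + 1 = #B - 1 + 2 by omega, pow_add, neg_one_sq, mul_one]
  simp only [zsmul_eq_mul, Int.cast_pow, Int.cast_neg, Int.cast_one, hsign]
  congr 1
  by_cases hBA : B.biUnion P ⊆ A
  · rw [if_pos hBA, Set.indicator_of_mem (by simpa [biUnion_subset] using hBA)]
    rfl
  · rw [if_neg hBA, Set.indicator_of_notMem (by simpa [biUnion_subset] using hBA)]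

theorem dCoef_eq_sum_powerset_ite_biUnion_eq {n : ℕ} {φ : Finset (Fin n) → ℚ}
    {P : ι → Finset (Fin n)} [Fintype ι]
    (h01 : ∀ A, φ A = 0 ∨ φ A = 1) (hmono : Monotone φ)
    (hP : ∀ A, (∃ j, P j = A) ↔ (φ A = 1 ∧ ∀ A' ⊂ A, φ A' = 0)) (A : Finset (Fin n)) :
    dCoef φ A = ∑ B ∈ (univ : Finset ι).powerset with B.Nonempty,
      (-1 : ℚ) ^ (#B - 1) * if B.biUnion P = A then 1 else 0 := by
  rw [show φ = _ from funext (eq_sum_powerset_ite_biUnion_subset h01 hmono hP), dCoef_sum_mul]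
  simp only [dCoef_ite_subset]

end MinimalPathSets

theorem dk_eq_incl_excl_min_path_sets_general
    (n r : ℕ)
    (φ : Finset (Fin n) → ℚ)
    (h01 : ∀ A, φ A = 0 ∨ φ A = 1)
    (hmono : ∀ A B : Finset (Fin n), A ⊆ B → φ A ≤ φ B)
    (P : Fin r → Finset (Fin n))
    (hP : ∀ A : Finset (Fin n),
      (∃ j, P j = A) ↔ (φ A = 1 ∧ ∀ A' ⊂ A, φ A' = 0)) :
    ∀ k : ℕ, 1 ≤ k → k ≤ n →
      dk φ k = ∑ B ∈ (Finset.univ : Finset (Fin r)).powerset.filter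
          (fun B => B.Nonempty ∧ (B.biUnion P).card = k),
          (-1 : ℚ) ^ (B.card - 1) := by
  intro k _ _
  calc dk φ k
      = ∑ A ∈ (univ : Finset (Fin n)).powerset with #A = k,
          ∑ B ∈ (univ : Finset (Fin r)).powerset with B.Nonempty,
            (-1 : ℚ) ^ (#B - 1) * if B.biUnion P = A then 1 else 0 :=
        sum_congr rfl fun A _ =>
          dCoef_eq_sum_powerset_ite_biUnion_eq h01 (fun A B => hmono A B) hP A
    _ = ∑ B ∈ (univ : Finset (Fin r)).powerset with B.Nonempty,
          (-1 : ℚ) ^ (#B - 1) * if #(B.biUnion P) = k then 1 else 0 := by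
        rw [sum_comm]
        simp only [← mul_sum, sum_ite_eq, mem_filter, mem_powerset, subset_univ, true_and]
    _ = _ := by
        rw [← filter_filter]
        simp only [mul_ite, mul_one, mul_zero, ← sum_filter]

/-- If `P₁,…,P_r` are the minimal path sets of a semicoherent system `φ`,
then for `1 ≤ k ≤ n`, `d_k = ∑_{∅ ≠ B ⊆ [r], |⋃_{j∈B} P_j| = k} (−1)^{|B|−1}`. -/
theorem dk_eq_incl_excl_min_path_sets
    (n r : ℕ) (hn : 1 ≤ n)
    (φ : Finset (Fin n) → ℚ)
    (h01 : ∀ A, φ A = 0 ∨ φ A = 1)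
    (hmono : ∀ A B : Finset (Fin n), A ⊆ B → φ A ≤ φ B)
    (hempty : φ ∅ = 0) (hfull : φ Finset.univ = 1)
    (P : Fin r → Finset (Fin n)) (hPinj : Function.Injective P)
    (hP : ∀ A : Finset (Fin n),
      (∃ j, P j = A) ↔ (φ A = 1 ∧ ∀ A' ⊂ A, φ A' = 0)) :
    ∀ k : ℕ, 1 ≤ k → k ≤ n →
      dk φ k = ∑ B ∈ (Finset.univ : Finset (Fin r)).powerset.filter
          (fun B => B.Nonempty ∧ (B.biUnion P).card = k),
          (-1 : ℚ) ^ (B.card - 1) :=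
  dk_eq_incl_excl_min_path_sets_general n r φ h01 hmono P hP
end

section
/- Let φ be the structure function of a semicoherent system on n components. Then α₁ = d₁, β₁ = d^D₁, α₂ = C(d₁, 2) + d₂, and β₂ = C(d^D₁, 2) + d^D₂, where C(m,2) = m(m−1)/2 denotes the binomial coefficient. -/
/-!
Let `T` be the set of components that form a path on their own. Since `φ ∅ = 0`, the Möbius
coefficients of singletons and pairs are `d {i} = φ {i}` and
`d {i, j} = φ {i, j} - φ {i} - φ {j}`. Hence `d₁ = |T| = α₁`, and for a monotone `0/1`-valued `φ`,
`d {i, j}` is `[{i, j} is a minimal path set] - [i, j ∈ T]`, so summing over pairs gives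
`d₂ = α₂ - C(|T|, 2)`. The minimal cut sets of `φ` are the minimal path sets of the dual,
which is again semicoherent, giving the statements for `β`.
-/

open Finset

/-- `α_k`: the number of minimal path sets of size `k`. -/
def alpha {n : ℕ} (φ : Finset (Fin n) → ℚ) (k : ℕ) : ℕ :=
  ((Finset.univ : Finset (Fin n)).powerset.filter
    (fun A => A.card = k ∧ φ A = 1 ∧ ∀ A' ⊂ A, φ A' = 0)).card

/-- `β_k`: the number of minimal cut sets of size `k`. -/
def beta {n : ℕ} (φ : Finset (Fin n) → ℚ) (k : ℕ) : ℕ :=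
  ((Finset.univ : Finset (Fin n)).powerset.filter
    (fun A => A.card = k ∧ φ Aᶜ = 0 ∧ ∀ A' ⊂ A, φ A'ᶜ = 1)).card

theorem Finset.ssubset_pair_iff {α : Type*} [DecidableEq α] {i j : α} (hij : i ≠ j)
    {A : Finset α} : A ⊂ {i, j} ↔ A = ∅ ∨ A = {i} ∨ A = {j} := by
  constructor
  · intro hA
    have hcard : #A < 2 := card_pair hij ▸ card_lt_card hA
    interval_cases h : #A
    · simp_all
    · obtain ⟨a, rfl⟩ := card_eq_one.mp h
      have ha : a = i ∨ a = j := by simpa using hA.1 (mem_singleton_self a)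
      rcases ha with rfl | rfl <;> simp
  · rintro (rfl | rfl | rfl) <;>
      refine ssubset_iff_subset_ne.2 ⟨by simp [subset_iff], fun h => ?_⟩ <;>
      simpa [card_pair hij] using congrArg card h

section StructureFunction

variable {n : ℕ} (φ : Finset (Fin n) → ℚ)

def IsMinPathSet (A : Finset (Fin n)) : Prop :=
  φ A = 1 ∧ ∀ A' ⊂ A, φ A' = 0

def singletonPaths : Finset (Fin n) :=
  univ.filter fun i => φ {i} = 1

lemma dk_eq_sum_powersetCard (k : ℕ) :
    dk φ k = ∑ A ∈ univ.powersetCard k, dCoef φ A := by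
  rw [dk, powersetCard_eq_filter]

open Classical in
lemma alpha_eq_card_filter_isMinPathSet (k : ℕ) :
    alpha φ k = #((univ.powersetCard k).filter (IsMinPathSet φ)) := by
  rw [alpha, powersetCard_eq_filter, filter_filter]
  unfold IsMinPathSet
  convert rfl

variable {φ}

lemma dCoef_singleton (hempty : φ ∅ = 0) (i : Fin n) : dCoef φ {i} = φ {i} := by
  rw [dCoef, ← insert_empty, sum_powerset_insert (notMem_empty i)]
  simp [hempty]

lemma dCoef_pair (hempty : φ ∅ = 0) {i j : Fin n} (hij : i ≠ j) :
    dCoef φ {i, j} = φ {i, j} - φ {i} - φ {j} := by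
  rw [dCoef, sum_powerset_insert (by simpa), ← insert_empty,
    sum_powerset_insert (notMem_empty j), sum_powerset_insert (notMem_empty j)]
  simp only [powerset_empty, insert_empty_eq, sum_singleton, card_empty, card_singleton,
    card_pair hij, hempty]
  ring

lemma isMinPathSet_singleton_iff (hempty : φ ∅ = 0) (i : Fin n) :
    IsMinPathSet φ {i} ↔ φ {i} = 1 := by
  simp [IsMinPathSet, ssubset_singleton_iff, hempty]

lemma isMinPathSet_pair_iff (hempty : φ ∅ = 0) {i j : Fin n} (hij : i ≠ j) :
    IsMinPathSet φ {i, j} ↔ φ {i, j} = 1 ∧ φ {i} = 0 ∧ φ {j} = 0 := by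
  simp [IsMinPathSet, ssubset_pair_iff hij, or_imp, forall_and, hempty]

lemma card_singletonPaths_eq_sum (h01 : ∀ A, φ A = 0 ∨ φ A = 1) :
    (#(singletonPaths φ) : ℚ) = ∑ i, φ {i} := by
  rw [singletonPaths, natCast_card_filter]
  refine sum_congr rfl fun i _ => ?_
  rcases h01 {i} with h | h <;> simp [h]

lemma alpha_one_eq_card_singletonPaths (hempty : φ ∅ = 0) :
    alpha φ 1 = #(singletonPaths φ) := by
  classical
  rw [alpha_eq_card_filter_isMinPathSet, powersetCard_one, filter_map, card_map, singletonPaths]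
  exact congrArg card (filter_congr fun i _ => isMinPathSet_singleton_iff hempty i)

lemma dk_one_eq_card_singletonPaths (h01 : ∀ A, φ A = 0 ∨ φ A = 1) (hempty : φ ∅ = 0) :
    dk φ 1 = #(singletonPaths φ) := by
  rw [dk_eq_sum_powersetCard, powersetCard_one, sum_map, card_singletonPaths_eq_sum h01]
  exact sum_congr rfl fun i _ => dCoef_singleton hempty i

lemma alpha_one_eq_dk_one (h01 : ∀ A, φ A = 0 ∨ φ A = 1) (hempty : φ ∅ = 0) :
    (alpha φ 1 : ℚ) = dk φ 1 := by
  rw [alpha_one_eq_card_singletonPaths hempty, dk_one_eq_card_singletonPaths h01 hempty]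

open Classical in
lemma dCoef_pair_eq_indicator_sub (h01 : ∀ A, φ A = 0 ∨ φ A = 1) (hmono : Monotone φ)
    (hempty : φ ∅ = 0) {i j : Fin n} (hij : i ≠ j) :
    dCoef φ {i, j} = (if IsMinPathSet φ {i, j} then 1 else 0) -
      if {i, j} ⊆ singletonPaths φ then 1 else 0 := by
  have hi : φ {i} ≤ φ {i, j} := hmono (by simp)
  have hj : φ {j} ≤ φ {i, j} := hmono (by simp)
  rw [isMinPathSet_pair_iff hempty hij, dCoef_pair hempty hij]
  simp only [insert_subset_iff, singleton_subset_iff, singletonPaths, mem_filter, mem_univ,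
    true_and]
  rcases h01 {i} with h1 | h1 <;> rcases h01 {j} with h2 | h2 <;>
    rcases h01 {i, j} with h3 | h3 <;> norm_num [h1, h2, h3] <;> linarith

lemma alpha_two_eq_dk_two_add_choose (h01 : ∀ A, φ A = 0 ∨ φ A = 1) (hmono : Monotone φ)
    (hempty : φ ∅ = 0) : (alpha φ 2 : ℚ) = dk φ 2 + (#(singletonPaths φ)).choose 2 := by
  classical
  have hpairs : (univ.powersetCard 2).filter (· ⊆ singletonPaths φ) =
      (singletonPaths φ).powersetCard 2 := by
    ext A
    simp [mem_powersetCard, and_comm]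
  rw [alpha_eq_card_filter_isMinPathSet, natCast_card_filter, dk_eq_sum_powersetCard,
    ← card_powersetCard, ← hpairs, natCast_card_filter, ← sum_add_distrib]
  refine sum_congr rfl fun A hA => ?_
  obtain ⟨i, j, hij, rfl⟩ := card_eq_two.mp (mem_powersetCard.mp hA).2
  rw [dCoef_pair_eq_indicator_sub h01 hmono hempty hij]
  ring

lemma alpha_two_eq_dk (h01 : ∀ A, φ A = 0 ∨ φ A = 1) (hmono : Monotone φ) (hempty : φ ∅ = 0) :
    (alpha φ 2 : ℚ) = dk φ 1 * (dk φ 1 - 1) / 2 + dk φ 2 := by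
  rw [alpha_two_eq_dk_two_add_choose h01 hmono hempty, dk_one_eq_card_singletonPaths h01 hempty,
    Nat.cast_choose_two]
  ring

variable (φ) in
lemma beta_eq_alpha_dualFun (k : ℕ) : beta φ k = alpha (dualFun φ) k := by
  simp only [beta, alpha, dualFun, sub_eq_zero, sub_eq_self, eq_comm (a := (1 : ℚ))]

lemma dualFun_eq_zero_or_one (h01 : ∀ A, φ A = 0 ∨ φ A = 1) (A : Finset (Fin n)) :
    dualFun φ A = 0 ∨ dualFun φ A = 1 := by
  rcases h01 Aᶜ with h | h <;> simp [dualFun, h]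

lemma dualFun_monotone (hmono : Monotone φ) : Monotone (dualFun φ) :=
  fun _ _ h => sub_le_sub_left (hmono (compl_subset_compl.mpr h)) 1

lemma dualFun_empty (hfull : φ univ = 1) : dualFun φ ∅ = 0 := by
  simp [dualFun, hfull]

end StructureFunction

theorem small_min_path_cut_sets_from_dk_general
    (n : ℕ)
    (φ : Finset (Fin n) → ℚ)
    (h01 : ∀ A, φ A = 0 ∨ φ A = 1)
    (hmono : ∀ A B : Finset (Fin n), A ⊆ B → φ A ≤ φ B)
    (hempty : φ ∅ = 0) (hfull : φ Finset.univ = 1) :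
    (alpha φ 1 : ℚ) = dk φ 1 ∧
    (beta φ 1 : ℚ) = dk (dualFun φ) 1 ∧
    (alpha φ 2 : ℚ) = dk φ 1 * (dk φ 1 - 1) / 2 + dk φ 2 ∧
    (beta φ 2 : ℚ) = dk (dualFun φ) 1 * (dk (dualFun φ) 1 - 1) / 2 + dk (dualFun φ) 2 := by
  have hmono : Monotone φ := fun A B h => hmono A B h
  have hd01 := dualFun_eq_zero_or_one h01
  have hdmono := dualFun_monotone hmono
  have hdempty := dualFun_empty hfull
  simp only [beta_eq_alpha_dualFun]
  exact ⟨alpha_one_eq_dk_one h01 hempty, alpha_one_eq_dk_one hd01 hdempty,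
    alpha_two_eq_dk h01 hmono hempty, alpha_two_eq_dk hd01 hdmono hdempty⟩

/-- `α₁ = d₁`, `β₁ = dᴰ₁`, `α₂ = C(d₁,2) + d₂`, and
`β₂ = C(dᴰ₁,2) + dᴰ₂`, where `C(m,2) = m(m−1)/2`. -/
theorem small_min_path_cut_sets_from_dk
    (n : ℕ) (hn : 1 ≤ n)
    (φ : Finset (Fin n) → ℚ)
    (h01 : ∀ A, φ A = 0 ∨ φ A = 1)
    (hmono : ∀ A B : Finset (Fin n), A ⊆ B → φ A ≤ φ B)
    (hempty : φ ∅ = 0) (hfull : φ Finset.univ = 1) :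
    (alpha φ 1 : ℚ) = dk φ 1 ∧
    (beta φ 1 : ℚ) = dk (dualFun φ) 1 ∧
    (alpha φ 2 : ℚ) = dk φ 1 * (dk φ 1 - 1) / 2 + dk φ 2 ∧
    (beta φ 2 : ℚ) = dk (dualFun φ) 1 * (dk (dualFun φ) 1 - 1) / 2 + dk (dualFun φ) 2 :=
  small_min_path_cut_sets_from_dk_general n φ h01 hmono hempty hfull
end

section
/- Let φ be the structure function of a semicoherent system on n components, let (s₁,…,s_n) be its structural signature, and let (s^D₁,…,s^D_n) be the structural signature of the dual structure function φ^D. Then s^D_k = s_{n+1−k} for every k = 1,…,n. -/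
open Finset

/-- The structural signature: `s_k = ∑_{|A| = n−k+1} φ(A)/C(n,|A|) − ∑_{|A| = n−k} φ(A)/C(n,|A|)`. -/
def sig {n : ℕ} (φ : Finset (Fin n) → ℚ) (k : ℕ) : ℚ :=
  (∑ A ∈ (Finset.univ : Finset (Fin n)).powerset.filter (fun A => A.card = n - k + 1),
      φ A / (n.choose A.card : ℚ))
  - ∑ A ∈ (Finset.univ : Finset (Fin n)).powerset.filter (fun A => A.card = n - k),
      φ A / (n.choose A.card : ℚ)

/-! Complementation is a bijection between the `m`-subsets and the `(n - m)`-subsets, and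
`C(n, m) = C(n, n - m)`; so averaging `φᴰ` over the `m`-subsets gives `1` minus the average of `φ`
over the `(n - m)`-subsets. Both terms of `sᴰ_k` are of this form, and the two `1`s cancel. -/

theorem Finset.sum_powersetCard_compl {α β : Type*} [Fintype α] [DecidableEq α]
    [AddCommMonoid β] {m : ℕ} (hm : m ≤ Fintype.card α) (f : Finset α → β) :
    ∑ A ∈ powersetCard m univ, f Aᶜ = ∑ B ∈ powersetCard (Fintype.card α - m) univ, f B := by
  refine sum_nbij' compl compl ?_ ?_ ?_ ?_ ?_ <;> intro A hA <;>
    simp only [mem_powersetCard_univ, card_compl, compl_compl] at hA ⊢ <;> omega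

def layerMean {n : ℕ} (φ : Finset (Fin n) → ℚ) (m : ℕ) : ℚ :=
  (∑ A ∈ powersetCard m univ, φ A) / n.choose m

theorem sig_eq_layerMean_sub {n : ℕ} (φ : Finset (Fin n) → ℚ) (k : ℕ) :
    sig φ k = layerMean φ (n - k + 1) - layerMean φ (n - k) := by
  simp only [sig, layerMean, ← powersetCard_eq_filter, sum_div]
  congr 1 <;> exact sum_congr rfl fun A hA => by rw [(mem_powersetCard.1 hA).2]

theorem layerMean_dualFun {n m : ℕ} (hm : m ≤ n) (φ : Finset (Fin n) → ℚ) :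
    layerMean (dualFun φ) m = 1 - layerMean φ (n - m) := by
  have hchoose : (n.choose m : ℚ) ≠ 0 := by exact_mod_cast (Nat.choose_pos hm).ne'
  have hcompl := sum_powersetCard_compl (α := Fin n) (by simpa using hm) φ
  rw [Fintype.card_fin] at hcompl
  simp only [layerMean, dualFun]
  rw [sum_sub_distrib, hcompl, Nat.choose_symm hm,
    sum_const, card_powersetCard, card_univ, Fintype.card_fin, nsmul_eq_mul, mul_one, sub_div, div_self hchoose]

theorem dual_signature_reverse_general
    (n : ℕ)
    (φ : Finset (Fin n) → ℚ) :
    ∀ k : ℕ, 1 ≤ k → k ≤ n → sig (dualFun φ) k = sig φ (n + 1 - k) := by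
  intro k hk1 hkn
  rw [sig_eq_layerMean_sub, sig_eq_layerMean_sub, layerMean_dualFun (by omega),
    layerMean_dualFun (by omega), show n - (n - k + 1) = k - 1 by omega,
    show n - (n - k) = k by omega, show n - (n + 1 - k) + 1 = k by omega,
    show n - (n + 1 - k) = k - 1 by omega]
  ring

/-- The structural signature of the dual system satisfies
`sᴰ_k = s_{n+1−k}` for every `k = 1,…,n`. -/
theorem dual_signature_reverse
    (n : ℕ) (hn : 1 ≤ n)
    (φ : Finset (Fin n) → ℚ)
    (h01 : ∀ A, φ A = 0 ∨ φ A = 1)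
    (hmono : ∀ A B : Finset (Fin n), A ⊆ B → φ A ≤ φ B)
    (hempty : φ ∅ = 0) (hfull : φ Finset.univ = 1) :
    ∀ k : ℕ, 1 ≤ k → k ≤ n → sig (dualFun φ) k = sig φ (n + 1 - k) :=
  dual_signature_reverse_general n φ
end

section
/- Let φ be the structure function of a semicoherent system on n ≥ 2 components with structural signature (s₁,…,s_n). Then (as equalities of rational numbers): α₁ = n·s_n, β₁ = n·s₁, α₂ = C(n·s_n, 2) + C(n,2)·(s_{n−1} − s_n), and β₂ = C(n·s₁, 2) + C(n,2)·(s₂ − s₁), where n·s_n and n·s₁ are nonnegative integers and C(m,2) = m(m−1)/2. -/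
/-!
Write `N_c` for the number of path sets of size `c`. The signature only sees these numbers:
`s_k = N_{n-k+1}/C(n,n-k+1) − N_{n-k}/C(n,n-k)`, so `s_n = N_1/n` and
`s_{n-1} = N_2/C(n,2) − N_1/n`. Since `φ(∅) = 0`, every path singleton is minimal, so `α₁ = N_1`.
A pair meeting one of the `α₁` path singletons is a path set by monotonicity, and a pair avoiding
them is a path set exactly when it is a minimal one; hence `N_2 + C(n − α₁, 2) = α₂ + C(n,2)`.
The cut-set formulas follow by applying these to the dual system `A ↦ 1 − φ(Aᶜ)`, whose minimal
path sets are the minimal cut sets of `φ` and whose signature is that of `φ` read backwards.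
-/

open Finset

lemma sum_eq_card_filter_eq_one {ι R : Type*} [AddCommMonoidWithOne R] [DecidableEq R]
    (s : Finset ι) (f : ι → R) (hf : ∀ x ∈ s, f x = 0 ∨ f x = 1) :
    ∑ x ∈ s, f x = #{x ∈ s | f x = 1} := by
  rw [← sum_boole]
  refine sum_congr rfl fun x hx => ?_
  rcases hf x hx with h | h <;> simp [h]

section

variable {n : ℕ}

/-- For `{0,1}`-valued `φ`, the number of path sets of size `c`. -/
def layerSum (φ : Finset (Fin n) → ℚ) (c : ℕ) : ℚ :=
  ∑ A ∈ powersetCard c univ, φ A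

lemma sum_filter_card_div_choose (φ : Finset (Fin n) → ℚ) (c : ℕ) :
    ∑ A ∈ (univ : Finset (Fin n)).powerset.filter (fun A => A.card = c),
      φ A / (n.choose A.card : ℚ) = layerSum φ c / n.choose c := by
  rw [← powersetCard_eq_filter, layerSum, sum_div]
  exact sum_congr rfl fun A hA => by rw [(mem_powersetCard.mp hA).2]

lemma sig_eq_layerSum (φ : Finset (Fin n) → ℚ) (k : ℕ) :
    sig φ k = layerSum φ (n - k + 1) / n.choose (n - k + 1)
      - layerSum φ (n - k) / n.choose (n - k) := by
  rw [sig, sum_filter_card_div_choose, sum_filter_card_div_choose]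

lemma layerSum_zero (φ : Finset (Fin n) → ℚ) : layerSum φ 0 = φ ∅ := by
  simp [layerSum]

lemma layerSum_one (φ : Finset (Fin n) → ℚ) : layerSum φ 1 = ∑ i, φ {i} := by
  simp [layerSum, powersetCard_one]

section MinimalPathSets

variable {φ : Finset (Fin n) → ℚ}

lemma alpha_eq_card_powersetCard (k : ℕ) :
    alpha φ k = #{A ∈ powersetCard k univ | φ A = 1 ∧ ∀ A' ⊂ A, φ A' = 0} := by
  rw [alpha, powersetCard_eq_filter, filter_filter]

lemma alpha_one_eq_card (hempty : φ ∅ = 0) : alpha φ 1 = #{i | φ {i} = 1} := by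
  rw [alpha_eq_card_powersetCard, powersetCard_one, filter_map, card_map]
  congr 1
  refine filter_congr fun i _ => ?_
  simp [ssubset_singleton_iff, hempty]

lemma eq_one_of_singleton_eq_one (h01 : ∀ A, φ A = 0 ∨ φ A = 1)
    (hmono : ∀ A B : Finset (Fin n), A ⊆ B → φ A ≤ φ B) {A : Finset (Fin n)} {i : Fin n}
    (hi : i ∈ A) (hφi : φ {i} = 1) : φ A = 1 := by
  have := hmono {i} A (singleton_subset_iff.mpr hi)
  rcases h01 A with h | h
  · linarith
  · exact h

lemma minimal_pair_iff (h01 : ∀ A, φ A = 0 ∨ φ A = 1) (hempty : φ ∅ = 0)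
    {A : Finset (Fin n)} (hA : #A = 2) :
    (∀ A' ⊂ A, φ A' = 0) ↔ ∀ i ∈ A, φ {i} ≠ 1 := by
  constructor
  · intro hmin i hi
    have hsub : {i} ⊂ A := Finset.ssubset_iff_subset_ne.mpr
      ⟨singleton_subset_iff.mpr hi, fun h => by simp [← h] at hA⟩
    simp [hmin _ hsub]
  · intro hsing A' hA'
    have hlt : #A' < 2 := hA ▸ card_lt_card hA'
    interval_cases h : #A'
    · rw [card_eq_zero.mp h, hempty]
    · obtain ⟨i, rfl⟩ := card_eq_one.mp h
      exact (h01 {i}).resolve_right (hsing i (hA'.1 (mem_singleton_self i)))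

lemma alpha_two_add_choose (h01 : ∀ A, φ A = 0 ∨ φ A = 1)
    (hmono : ∀ A B : Finset (Fin n), A ⊆ B → φ A ≤ φ B) (hempty : φ ∅ = 0) :
    alpha φ 2 + n.choose 2
      = #{A ∈ powersetCard 2 univ | φ A = 1} + (n - alpha φ 1).choose 2 := by
  set S : Finset (Fin n) := {i | φ {i} = 1}
  set pairs : Finset (Finset (Fin n)) := powersetCard 2 univ
  have hminimal : alpha φ 2 = #{A ∈ pairs | φ A = 1 ∧ A ⊆ Sᶜ} := by
    rw [alpha_eq_card_powersetCard]
    congr 1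
    refine filter_congr fun A hA => ?_
    rw [minimal_pair_iff h01 hempty (mem_powersetCard.mp hA).2]
    simp [S, subset_iff]
  have hmeeting : {A ∈ pairs | φ A = 1 ∧ ¬A ⊆ Sᶜ} = {A ∈ pairs | ¬A ⊆ Sᶜ} := by
    refine filter_congr fun A _ => and_iff_right_of_imp fun hA => ?_
    obtain ⟨i, hi, hiS⟩ := not_subset.mp hA
    exact eq_one_of_singleton_eq_one h01 hmono hi (by simpa [S] using hiS)
  have havoiding : #{A ∈ pairs | A ⊆ Sᶜ} = (n - alpha φ 1).choose 2 := by
    have hcompl : #Sᶜ = n - #S := by simp [card_compl]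
    rw [alpha_one_eq_card hempty, ← hcompl, ← card_powersetCard]
    congr 1
    ext A
    simp [pairs, mem_powersetCard, and_comm]
  have hpairs : #pairs = n.choose 2 := by simp [pairs, card_powersetCard]
  have hsplitPaths := card_filter_add_card_filter_not (s := {A ∈ pairs | φ A = 1})
    (fun A => A ⊆ Sᶜ)
  have hsplitPairs := card_filter_add_card_filter_not (s := pairs) (fun A => A ⊆ Sᶜ)
  rw [filter_filter, filter_filter, hmeeting] at hsplitPaths
  rw [hminimal, ← havoiding, ← hpairs]
  omega

end MinimalPathSets

section SignatureFormulas

variable {φ : Finset (Fin n) → ℚ}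

lemma layerSum_one_eq_alpha_one (h01 : ∀ A, φ A = 0 ∨ φ A = 1) (hempty : φ ∅ = 0) :
    layerSum φ 1 = alpha φ 1 := by
  rw [layerSum_one, sum_eq_card_filter_eq_one _ _ fun i _ => h01 {i}, alpha_one_eq_card hempty]

lemma sig_self_eq (h01 : ∀ A, φ A = 0 ∨ φ A = 1) (hempty : φ ∅ = 0) :
    sig φ n = alpha φ 1 / n := by
  simp [sig_eq_layerSum, layerSum_zero, hempty, layerSum_one_eq_alpha_one h01 hempty]

lemma alpha_one_eq_mul_sig (h01 : ∀ A, φ A = 0 ∨ φ A = 1) (hempty : φ ∅ = 0) :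
    (alpha φ 1 : ℚ) = n * sig φ n := by
  rcases eq_or_ne n 0 with rfl | hn
  · simp [alpha_one_eq_card hempty]
  · rw [sig_self_eq h01 hempty, mul_div_cancel₀ _ (by exact_mod_cast hn)]

lemma alpha_two_eq_sig (hn : 2 ≤ n) (h01 : ∀ A, φ A = 0 ∨ φ A = 1)
    (hmono : ∀ A B : Finset (Fin n), A ⊆ B → φ A ≤ φ B) (hempty : φ ∅ = 0) :
    (alpha φ 2 : ℚ) = ((n : ℚ) * sig φ n) * ((n : ℚ) * sig φ n - 1) / 2
        + (n.choose 2 : ℚ) * (sig φ (n - 1) - sig φ n) := by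
  have hsig_pred : sig φ (n - 1) = layerSum φ 2 / n.choose 2 - alpha φ 1 / n := by
    rw [sig_eq_layerSum, show n - (n - 1) = 1 by omega, layerSum_one_eq_alpha_one h01 hempty]
    simp
  have hcount := alpha_two_add_choose h01 hmono hempty
  have ha : alpha φ 1 ≤ n := alpha_one_eq_card hempty ▸ card_filter_le _ _ |>.trans (by simp)
  have hcountℚ : (alpha φ 2 : ℚ) + n.choose 2
      = layerSum φ 2 + (n - alpha φ 1) * (n - alpha φ 1 - 1) / 2 := by
    rw [layerSum, sum_eq_card_filter_eq_one _ _ fun A _ => h01 A, ← Nat.cast_sub ha,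
      ← Nat.cast_choose_two]
    exact_mod_cast hcount
  have hn0 : (n : ℚ) ≠ 0 := by positivity
  have hn1 : (n : ℚ) - 1 ≠ 0 := by
    rw [sub_ne_zero]; exact_mod_cast (by omega : n ≠ 1)
  rw [← alpha_one_eq_mul_sig h01 hempty, hsig_pred, sig_self_eq h01 hempty, Nat.cast_choose_two]
  rw [Nat.cast_choose_two] at hcountℚ
  field_simp
  linear_combination 2 * hcountℚ

end SignatureFormulas

section Duality

def dualStructure (φ : Finset (Fin n) → ℚ) (A : Finset (Fin n)) : ℚ :=
  1 - φ Aᶜ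

lemma layerSum_dualStructure (φ : Finset (Fin n) → ℚ) {c : ℕ} (hc : c ≤ n) :
    layerSum (dualStructure φ) c = n.choose c - layerSum φ (n - c) := by
  have hcompl : ∑ A ∈ powersetCard c univ, φ Aᶜ = layerSum φ (n - c) := by
    refine sum_nbij' compl compl (fun A hA => ?_) (fun A hA => ?_) (fun A _ => compl_compl A)
      (fun A _ => compl_compl A) fun A _ => rfl
    · simp_all [mem_powersetCard, card_compl]
    · simp_all [mem_powersetCard, card_compl]
      omega
  simp [layerSum, dualStructure, sum_sub_distrib, hcompl]

lemma sig_dualStructure (φ : Finset (Fin n) → ℚ) {k : ℕ} (hk : 1 ≤ k) (hkn : k ≤ n) :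
    sig (dualStructure φ) k = sig φ (n + 1 - k) := by
  have hchoose : ∀ c ≤ n, (n.choose c : ℚ) ≠ 0 := fun c hc => by
    exact_mod_cast (Nat.choose_pos hc).ne'
  rw [sig_eq_layerSum, sig_eq_layerSum, layerSum_dualStructure φ (by omega),
    layerSum_dualStructure φ (by omega), show n - (n - k + 1) = k - 1 by omega,
    show n - (n - k) = k by omega, show n - (n + 1 - k) + 1 = k by omega,
    show n - (n + 1 - k) = k - 1 by omega, Nat.choose_symm (by omega : k ≤ n),
    show n - k + 1 = n - (k - 1) by omega, Nat.choose_symm (by omega : k - 1 ≤ n)]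
  field_simp [hchoose k hkn, hchoose (k - 1) (by omega)]
  ring

variable {φ : Finset (Fin n) → ℚ}

lemma beta_eq_alpha_dualStructure (k : ℕ) : beta φ k = alpha (dualStructure φ) k := by
  simp only [beta, alpha, dualStructure, sub_eq_zero, sub_eq_self, eq_comm (a := (1 : ℚ))]

lemma dualStructure_zero_or_one (h01 : ∀ A, φ A = 0 ∨ φ A = 1) (A : Finset (Fin n)) :
    dualStructure φ A = 0 ∨ dualStructure φ A = 1 := by
  rcases h01 Aᶜ with h | h <;> simp [dualStructure, h]

lemma dualStructure_mono (hmono : ∀ A B : Finset (Fin n), A ⊆ B → φ A ≤ φ B)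
    (A B : Finset (Fin n)) (hAB : A ⊆ B) : dualStructure φ A ≤ dualStructure φ B :=
  sub_le_sub_left (hmono _ _ (compl_subset_compl.mpr hAB)) 1

end Duality

end

/-- For `n ≥ 2`: `α₁ = n·s_n`, `β₁ = n·s₁`,
`α₂ = C(n·s_n, 2) + C(n,2)·(s_{n−1} − s_n)`, and `β₂ = C(n·s₁, 2) + C(n,2)·(s₂ − s₁)`,
where `n·s_n` and `n·s₁` are nonnegative integers and `C(m,2) = m(m−1)/2`. -/
theorem small_min_path_cut_sets_from_signature
    (n : ℕ) (hn : 2 ≤ n)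
    (φ : Finset (Fin n) → ℚ)
    (h01 : ∀ A, φ A = 0 ∨ φ A = 1)
    (hmono : ∀ A B : Finset (Fin n), A ⊆ B → φ A ≤ φ B)
    (hempty : φ ∅ = 0) (hfull : φ Finset.univ = 1) :
    (∃ m : ℕ, (n : ℚ) * sig φ n = m) ∧
    (∃ m : ℕ, (n : ℚ) * sig φ 1 = m) ∧
    (alpha φ 1 : ℚ) = (n : ℚ) * sig φ n ∧
    (beta φ 1 : ℚ) = (n : ℚ) * sig φ 1 ∧
    (alpha φ 2 : ℚ) = ((n : ℚ) * sig φ n) * ((n : ℚ) * sig φ n - 1) / 2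
        + (n.choose 2 : ℚ) * (sig φ (n - 1) - sig φ n) ∧
    (beta φ 2 : ℚ) = ((n : ℚ) * sig φ 1) * ((n : ℚ) * sig φ 1 - 1) / 2
        + (n.choose 2 : ℚ) * (sig φ 2 - sig φ 1) := by
  have hdual01 := dualStructure_zero_or_one h01
  have hdual_empty : dualStructure φ ∅ = 0 := by simp [dualStructure, hfull]
  have hsig_first : sig (dualStructure φ) n = sig φ 1 := by
    rw [sig_dualStructure φ (by omega) le_rfl, Nat.add_sub_cancel_left]
  have hsig_second : sig (dualStructure φ) (n - 1) = sig φ 2 := by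
    rw [sig_dualStructure φ (by omega) (by omega), show n + 1 - (n - 1) = 2 by omega]
  have hα₁ := alpha_one_eq_mul_sig h01 hempty
  have hβ₁ : (beta φ 1 : ℚ) = n * sig φ 1 := by
    rw [beta_eq_alpha_dualStructure, alpha_one_eq_mul_sig hdual01 hdual_empty, hsig_first]
  have hβ₂ := alpha_two_eq_sig hn hdual01 (dualStructure_mono hmono) hdual_empty
  rw [← beta_eq_alpha_dualStructure, hsig_first, hsig_second] at hβ₂
  exact ⟨⟨_, hα₁.symm⟩, ⟨_, hβ₁.symm⟩, hα₁, hβ₁, alpha_two_eq_sig hn h01 hmono hempty, hβ₂⟩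
end
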